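/- arXiv:1504.08179 — 6 statements merged into one kernel-verified Lean document; each statement's English description precedes it below -/
import Mathlib

section
/- Let G be a group acting on a set X equipped with a linear order, let H be a subgroup of G of finite index, let S ⊆ G be a (finite) complete set of representatives for the right cosets H\G (i.e. every g ∈ G lies in Hs for exactly one s ∈ S), and let c : X → X be a G-canonical representative function, meaning c(x) lies in the G-orbit of x for every x and c(x) = c(y) whenever x and y lie in the same G-orbit. Then for every x ∈ X the set T(x) = { s·c(x) : s ∈ S } ∩ (H-orbit of x) is finite and nonempty, so r(x) := min T(x) is well defined; and for all x, y ∈ X, x and y lie in the same H-orbit if and only if r(x) = r(y). -/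
/-- The set `T(x) = { s • c(x) : s ∈ S } ∩ (H-orbit of x)`. -/
def reductionSet {G X : Type*} [Group G] [MulAction G X] (H : Subgroup G)
    (S : Set G) (c : X → X) (x : X) : Set X :=
  {z | ∃ s ∈ S, z = s • c x} ∩ MulAction.orbit H x

/-- Correctness of the reduction algorithm: if `S` is a finite complete set of
representatives of the right cosets `H\G` and `c` is a `G`-canonical representative
function, then `T(x)` is finite and nonempty (so its minimum `r(x)` is well defined),
and two points lie in the same `H`-orbit iff they have the same minimum. -/
theorem reduction_algorithm_correct
    {G X : Type*} [Group G] [MulAction G X] [LinearOrder X]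
    (H : Subgroup G) (S : Set G) (hSfin : S.Finite)
    (hS : ∀ g : G, ∃! s, s ∈ S ∧ ∃ h ∈ H, g = h * s)
    (c : X → X)
    (hc_orbit : ∀ x : X, c x ∈ MulAction.orbit G x)
    (hc_const : ∀ x y : X, y ∈ MulAction.orbit G x → c x = c y) :
    (∀ x : X, (reductionSet H S c x).Finite ∧ (reductionSet H S c x).Nonempty ∧
        ∃ m, IsLeast (reductionSet H S c x) m) ∧
    (∀ r : X → X, (∀ x : X, IsLeast (reductionSet H S c x) (r x)) →
        ∀ x y : X, y ∈ MulAction.orbit H x ↔ r x = r y) := by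
  -- Finiteness
  have hfin : ∀ x : X, (reductionSet H S c x).Finite := by
    intro x
    apply Set.Finite.inter_of_left
    have : {z | ∃ s ∈ S, z = s • c x} ⊆ (fun s : G => s • c x) '' S := by
      rintro z ⟨s, hs, rfl⟩
      exact ⟨s, hs, rfl⟩
    exact (hSfin.image _).subset this
  -- Nonemptiness
  have hne : ∀ x : X, (reductionSet H S c x).Nonempty := by
    intro x
    obtain ⟨g, hg⟩ := hc_orbit x
    -- c x = g • x, so x = g⁻¹ • c x; write g⁻¹ = h * s
    obtain ⟨s, ⟨hsS, h, hH, hgs⟩, -⟩ := hS g⁻¹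
    refine ⟨s • c x, ⟨s, hsS, rfl⟩, ⟨⟨h, hH⟩⁻¹, ?_⟩⟩
    have hx : (h * s) • c x = x := by
      rw [← hgs, ← hg]; exact inv_smul_smul g x
    show (⟨h, hH⟩⁻¹ : H) • x = s • c x
    calc (⟨h, hH⟩⁻¹ : H) • x = h⁻¹ • x := rfl
      _ = h⁻¹ • (h * s) • c x := by rw [hx]
      _ = s • c x := by rw [mul_smul, inv_smul_smul]
  constructor
  · intro x
    refine ⟨hfin x, hne x, ?_⟩
    obtain ⟨m, hm, hmin⟩ := Set.exists_min_image _ id (hfin x) (hne x)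
    exact ⟨m, hm, fun b hb => hmin b hb⟩
  · intro r hr x y
    -- reductionSet is H-orbit invariant
    have hkey : ∀ x y : X, y ∈ MulAction.orbit H x →
        reductionSet H S c x = reductionSet H S c y := by
      intro x y hy
      have hG : y ∈ MulAction.orbit G x := by
        obtain ⟨h, rfl⟩ := hy
        exact ⟨(h : G), rfl⟩
      have hc : c x = c y := hc_const x y hG
      have horb : MulAction.orbit H x = MulAction.orbit H y :=
        (MulAction.orbit_eq_iff.mpr hy).symm
      unfold reductionSet
      rw [hc, horb]
    constructor
    · intro hy
      have h1 := hr x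
      rw [hkey x y hy] at h1
      exact h1.unique (hr y)
    · intro heq
      have h1 : r x ∈ MulAction.orbit H x := ((hr x).1).2
      have h2 : r y ∈ MulAction.orbit H y := ((hr y).1).2
      rw [← heq] at h2
      have := (MulAction.orbit_eq_iff.mpr h1).symm.trans
        (MulAction.orbit_eq_iff.mpr h2)
      exact this ▸ MulAction.mem_orbit_self y
end

section
/- Every positive definite integral binary quadratic form [a,b,c] of discriminant −15 with a divisible by 3 is Γ0(3)-equivalent to exactly one of the forms [3,−3,2] = 3X² − 3XY + 2Y² and [6,3,1] = 6X² + 3XY + Y²; in particular these two forms are inequivalent under Γ0(3). -/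
/-- The value of the integral binary quadratic form `[a,b,c]` at `(X, Y)`:
`Q(X,Y) = a X² + b X Y + c Y²`. -/
def evalQF (Q : ℤ × ℤ × ℤ) (X Y : ℤ) : ℤ :=
  Q.1 * X ^ 2 + Q.2.1 * X * Y + Q.2.2 * Y ^ 2

/-- `SLAct γ Q Q'` says that `Q|γ = Q'`, i.e. `Q(pX+qY, rX+sY) = Q'(X,Y)`
for `γ = [[p,q],[r,s]] ∈ SL(2,ℤ)`. -/
def SLAct (γ : Matrix.SpecialLinearGroup (Fin 2) ℤ) (Q Q' : ℤ × ℤ × ℤ) : Prop :=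
  ∀ X Y : ℤ,
    evalQF Q ((γ : Matrix (Fin 2) (Fin 2) ℤ) 0 0 * X + (γ : Matrix (Fin 2) (Fin 2) ℤ) 0 1 * Y)
      ((γ : Matrix (Fin 2) (Fin 2) ℤ) 1 0 * X + (γ : Matrix (Fin 2) (Fin 2) ℤ) 1 1 * Y)
      = evalQF Q' X Y

/-- Two forms are `SL(2,ℤ)`-equivalent if some `γ ∈ SL(2,ℤ)` carries one to the other. -/
def SLEquiv (Q Q' : ℤ × ℤ × ℤ) : Prop :=
  ∃ γ : Matrix.SpecialLinearGroup (Fin 2) ℤ, SLAct γ Q Q'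

/-- Two forms are `Γ₀(N)`-equivalent if some `γ ∈ SL(2,ℤ)` with lower-left entry
divisible by `N` carries one to the other. -/
def Gamma0Equiv (N : ℕ) (Q Q' : ℤ × ℤ × ℤ) : Prop :=
  ∃ γ : Matrix.SpecialLinearGroup (Fin 2) ℤ,
    (N : ℤ) ∣ (γ : Matrix (Fin 2) (Fin 2) ℤ) 1 0 ∧ SLAct γ Q Q'

lemma gamma0_mk (p q r s : ℤ) (hdet : p * s - q * r = 1) (h3 : (3:ℤ) ∣ r) (Q Q' : ℤ × ℤ × ℤ)
    (h : ∀ X Y : ℤ, evalQF Q (p*X+q*Y) (r*X+s*Y) = evalQF Q' X Y) : Gamma0Equiv 3 Q Q' := by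
  refine ⟨⟨!![p,q;r,s], by simp [Matrix.det_fin_two_of]; linarith⟩, ?_, ?_⟩
  · simpa using h3
  · intro X Y; simpa using h X Y

lemma gamma0_dest {Q Q' : ℤ × ℤ × ℤ} (h : Gamma0Equiv 3 Q Q') :
    ∃ p q r s : ℤ, p * s - q * r = 1 ∧ (3:ℤ) ∣ r ∧
      ∀ X Y : ℤ, evalQF Q (p*X+q*Y) (r*X+s*Y) = evalQF Q' X Y := by
  obtain ⟨γ, h3, hact⟩ := h
  refine ⟨γ 0 0, γ 0 1, γ 1 0, γ 1 1, ?_, h3, hact⟩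
  have := γ.2
  rw [Matrix.det_fin_two] at this
  linarith

lemma gamma0_trans {Q Q' Q'' : ℤ × ℤ × ℤ} (h1 : Gamma0Equiv 3 Q Q')
    (h2 : Gamma0Equiv 3 Q' Q'') : Gamma0Equiv 3 Q Q'' := by
  obtain ⟨p, q, r, s, hdet, h3, hact⟩ := gamma0_dest h1
  obtain ⟨p', q', r', s', hdet', h3', hact'⟩ := gamma0_dest h2
  refine gamma0_mk (p*p'+q*r') (p*q'+q*s') (r*p'+s*r') (r*q'+s*s')
    (by nlinarith [hdet, hdet']) (dvd_add (h3.mul_right _) (h3'.mul_left _)) Q Q'' ?_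
  intro X Y
  have e1 := hact (p'*X+q'*Y) (r'*X+s'*Y)
  have e2 := hact' X Y
  rw [show p*(p'*X+q'*Y)+q*(r'*X+s'*Y) = (p*p'+q*r')*X+(p*q'+q*s')*Y by ring,
      show r*(p'*X+q'*Y)+s*(r'*X+s'*Y) = (r*p'+s*r')*X+(r*q'+s*s')*Y by ring] at e1
  rw [e1, e2]

lemma gamma0_symm {Q Q' : ℤ × ℤ × ℤ} (h : Gamma0Equiv 3 Q Q') : Gamma0Equiv 3 Q' Q := by
  obtain ⟨p, q, r, s, hdet, h3, hact⟩ := gamma0_dest h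
  refine gamma0_mk s (-q) (-r) p (by linarith) (dvd_neg.mpr h3) Q' Q ?_
  intro X Y
  have e := hact (s*X + -q*Y) (-r*X + p*Y)
  rw [show p*(s*X + -q*Y)+q*(-r*X + p*Y) = (p*s-q*r)*X by ring,
      show r*(s*X + -q*Y)+s*(-r*X + p*Y) = (p*s-q*r)*Y by ring, hdet, one_mul, one_mul] at e
  exact e.symm

/-- translation by `t` : `(a,b,c) ↦ (a, b+2at, at²+bt+c)` -/
lemma gamma0_translate (a b c t : ℤ) :
    Gamma0Equiv 3 (a, b, c) (a, b + 2*a*t, a*t^2 + b*t + c) := by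
  refine gamma0_mk 1 t 0 1 (by ring) ⟨0, by ring⟩ _ _ ?_
  intro X Y; simp only [evalQF]; ring

/-- shear by `3k` : `(a,b,c) ↦ (a+3kb+9k²c, b+6kc, c)` -/
lemma gamma0_shear (a b c k : ℤ) :
    Gamma0Equiv 3 (a, b, c) (a + 3*k*b + 9*k^2*c, b + 6*k*c, c) := by
  refine gamma0_mk 1 0 (3*k) 1 (by ring) ⟨k, by ring⟩ _ _ ?_
  intro X Y; simp only [evalQF]; ring

lemma finite_case (a b' c' : ℤ) (ha : 0 < a) (hc : 0 < c') (hd' : b'^2 - 4*a*c' = -15)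
    (h3a : 3 ∣ a) (h3b : 3 ∣ b') (hr1 : -a < b') (hr2 : b' ≤ a)
    (hl : -(3*c') ≤ b') (hu : b' ≤ 3*c') :
    (a = 3 ∧ b' = -3 ∧ c' = 2) ∨ (a = 3 ∧ b' = 3 ∧ c' = 2) ∨
    (a = 6 ∧ b' = -3 ∧ c' = 1) ∨ (a = 6 ∧ b' = 3 ∧ c' = 1) := by
  obtain ⟨a1, ha1⟩ := h3a
  obtain ⟨b1, hb1⟩ := h3b
  have hb2 : b'^2 ≤ 3*a*c' := by
    nlinarith [mul_nonneg (by linarith : (0:ℤ) ≤ a - b') (by linarith : (0:ℤ) ≤ b' + 3*c'),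
      mul_nonneg (by linarith : (0:ℤ) ≤ a + b') (by linarith : (0:ℤ) ≤ 3*c' - b')]
  have hac : a*c' ≤ 15 := by nlinarith
  have ha15 : a ≤ 15 := by nlinarith
  have ha1b : 1 ≤ a1 ∧ a1 ≤ 5 := by omega
  have hc5 : c' ≤ 5 := by nlinarith
  have h9 : 9*(b1*b1) - 12*(a1*c') = -15 := by
    rw [ha1, hb1] at hd'; linear_combination hd'
  have hb1b : -5 ≤ b1 ∧ b1 ≤ 5 := by omega
  obtain ⟨hL, hU⟩ := ha1b
  obtain ⟨hL2, hU2⟩ := hb1b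
  interval_cases a1 <;> interval_cases b1 <;> omega

lemma main_reduce (n : ℕ) : ∀ a b c : ℤ, a ≤ n → 0 < a → b^2 - 4*a*c = -15 → 3 ∣ a → 3 ∣ b →
    Gamma0Equiv 3 (a, b, c) (3, -3, 2) ∨ Gamma0Equiv 3 (a, b, c) (6, 3, 1) := by
  induction n with
  | zero =>
    intro a b c han ha _ _ _
    exfalso; exact_mod_cast lt_irrefl (0:ℤ) (lt_of_lt_of_le ha (by exact_mod_cast han))
  | succ n ih =>
    intro a b c han ha hd h3a h3b
    -- normalize b into (-a, a]
    set t : ℤ := -((b + a - 1) / (2*a)) with ht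
    set b' : ℤ := b + 2*a*t with hb'
    set c' : ℤ := a*t^2 + b*t + c with hc'
    have h2a : (0:ℤ) < 2*a := by linarith
    have hrange : -a < b' ∧ b' ≤ a := by
      have he : b + a - 1 = 2*a * ((b + a - 1) / (2*a)) + (b + a - 1) % (2*a) :=
        (Int.mul_ediv_add_emod _ _).symm
      have h0 : 0 ≤ (b + a - 1) % (2*a) := Int.emod_nonneg _ (by linarith)
      have h1 : (b + a - 1) % (2*a) < 2*a := Int.emod_lt_of_pos _ h2a
      constructor <;> [nlinarith [he]; nlinarith [he]]
    have heq1 : Gamma0Equiv 3 (a, b, c) (a, b', c') := gamma0_translate a b c t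
    have hd' : b'^2 - 4*a*c' = -15 := by rw [hb', hc']; ring_nf; linarith [hd]
    have h3b' : 3 ∣ b' := by
      obtain ⟨a1, ha1⟩ := h3a; obtain ⟨b1, hb1⟩ := h3b
      exact ⟨b1 + 2*a1*t, by rw [hb', hb1, ha1]; ring⟩
    have hcpos : 0 < c' := by nlinarith [sq_nonneg b']
    rcases lt_or_ge b' (-(3*c')) with hcase | hcase
    · -- b' < -3c' : shear k = 1 decreases a
      set a2 : ℤ := a + 3*b' + 9*c' with ha2
      have hlt : a2 < a := by linarith
      have hd2 : (b' + 6*c')^2 - 4*a2*c' = -15 := by rw [ha2]; ring_nf; linarith [hd']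
      have ha2pos : 0 < a2 := by nlinarith [sq_nonneg (b' + 6*c')]
      have h3a2 : 3 ∣ a2 := by
        obtain ⟨b1, hb1⟩ := h3b'; obtain ⟨a1, ha1⟩ := h3a
        exact ⟨a1 + 3*b1 + 3*c', by rw [ha2, hb1, ha1]; ring⟩
      have h3b2 : 3 ∣ b' + 6*c' := by
        obtain ⟨b1, hb1⟩ := h3b'; exact ⟨b1 + 2*c', by rw [hb1]; ring⟩
      have heq2 : Gamma0Equiv 3 (a, b', c') (a2, b' + 6*c', c') := by
        have := gamma0_shear a b' c' 1; rw [ha2]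
        convert this using 3 <;> ring
      rcases ih a2 (b' + 6*c') c' (by omega) ha2pos hd2 h3a2 h3b2 with h | h
      · exact Or.inl (gamma0_trans (gamma0_trans heq1 heq2) h)
      · exact Or.inr (gamma0_trans (gamma0_trans heq1 heq2) h)
    · rcases le_or_gt b' (3*c') with hcase2 | hcase2
      · -- -3c' ≤ b' ≤ 3c' : the finite case
        rcases finite_case a b' c' ha hcpos hd' h3a h3b' hrange.1 hrange.2 hcase hcase2
          with ⟨e1, e2, e3⟩ | ⟨e1, e2, e3⟩ | ⟨e1, e2, e3⟩ | ⟨e1, e2, e3⟩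
        · have hpr : (a, b', c') = ((3:ℤ), (-3:ℤ), (2:ℤ)) := by rw [e1, e2, e3]
          rw [hpr] at heq1; exact Or.inl heq1
        · have hpr : (a, b', c') = ((3:ℤ), (3:ℤ), (2:ℤ)) := by rw [e1, e2, e3]
          rw [hpr] at heq1
          have e := gamma0_translate 3 3 2 (-1)
          norm_num at e
          exact Or.inl (gamma0_trans heq1 e)
        · have hpr : (a, b', c') = ((6:ℤ), (-3:ℤ), (1:ℤ)) := by rw [e1, e2, e3]
          rw [hpr] at heq1
          have e := gamma0_shear 6 (-3) 1 1
          norm_num at e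
          exact Or.inr (gamma0_trans heq1 e)
        · have hpr : (a, b', c') = ((6:ℤ), (3:ℤ), (1:ℤ)) := by rw [e1, e2, e3]
          rw [hpr] at heq1; exact Or.inr heq1
      · -- b' > 3c' : shear k = -1 decreases a
        set a2 : ℤ := a - 3*b' + 9*c' with ha2
        have hlt : a2 < a := by linarith
        have hd2 : (b' - 6*c')^2 - 4*a2*c' = -15 := by rw [ha2]; ring_nf; linarith [hd']
        have ha2pos : 0 < a2 := by nlinarith [sq_nonneg (b' - 6*c')]
        have h3a2 : 3 ∣ a2 := by
          obtain ⟨b1, hb1⟩ := h3b'; obtain ⟨a1, ha1⟩ := h3a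
          exact ⟨a1 - 3*b1 + 3*c', by rw [ha2, hb1, ha1]; ring⟩
        have h3b2 : 3 ∣ b' - 6*c' := by
          obtain ⟨b1, hb1⟩ := h3b'; exact ⟨b1 - 2*c', by rw [hb1]; ring⟩
        have heq2 : Gamma0Equiv 3 (a, b', c') (a2, b' - 6*c', c') := by
          have := gamma0_shear a b' c' (-1); rw [ha2]
          convert this using 3 <;> ring
        rcases ih a2 (b' - 6*c') c' (by omega) ha2pos hd2 h3a2 h3b2 with h | h
        · exact Or.inl (gamma0_trans (gamma0_trans heq1 heq2) h)
        · exact Or.inr (gamma0_trans (gamma0_trans heq1 heq2) h)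

lemma not_equiv_targets : ¬ Gamma0Equiv 3 (3, -3, 2) (6, 3, 1) := by
  intro h
  obtain ⟨p, q, r, s, hdet, h3, hact⟩ := gamma0_dest h
  have e := hact 0 1
  simp only [evalQF] at e
  obtain ⟨u, hu0, v, hv0, h12⟩ : ∃ u, 0 ≤ u ∧ ∃ v, 0 ≤ v ∧ 9*u + 15*v = 12 :=
    ⟨(2*q-s)*(2*q-s), mul_self_nonneg _, s*s, mul_self_nonneg _, by linear_combination 12*e⟩
  omega

/-- Every positive definite integral binary quadratic form `[a,b,c]` of discriminant
`-15` with `3 ∣ a` is `Γ₀(3)`-equivalent to exactly one of `[3,-3,2]` and `[6,3,1]`;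
in particular these two forms are inequivalent under `Γ₀(3)`. -/
theorem disc_neg15_level3_classes :
    (∀ a b c : ℤ, 0 < a → b ^ 2 - 4 * a * c = -15 → 3 ∣ a →
      Xor' (Gamma0Equiv 3 (a, b, c) (3, -3, 2)) (Gamma0Equiv 3 (a, b, c) (6, 3, 1))) ∧
    ¬ Gamma0Equiv 3 (3, -3, 2) (6, 3, 1) := by
  refine ⟨?_, not_equiv_targets⟩
  intro a b c ha hd h3a
  have h3b : 3 ∣ b := by
    obtain ⟨a1, ha1⟩ := h3a
    have hb2 : (3:ℤ) ∣ b^2 := ⟨4*a1*c - 5, by rw [show b^2 = 4*a*c - 15 by linarith, ha1]; ring⟩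
    exact Int.prime_three.dvd_of_dvd_pow hb2
  rcases main_reduce a.toNat a b c (Int.self_le_toNat a) ha hd h3a h3b with h | h
  · exact Or.inl ⟨h, fun h' => not_equiv_targets (gamma0_trans (gamma0_symm h) h')⟩
  · exact Or.inr ⟨h, fun h' => not_equiv_targets (gamma0_trans (gamma0_symm h') h)⟩
end

section
/- Every positive definite integral binary quadratic form of discriminant −4 is Γ0(3)-equivalent to exactly one of the forms [1,0,1] = X² + Y² and [2,−2,1] = 2X² − 2XY + Y²; in particular these two forms are inequivalent under Γ0(3). -/
abbrev SL2' := Matrix.SpecialLinearGroup (Fin 2) ℤ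

def mkSL (p q r s : ℤ) (h : p * s - q * r = 1) : SL2' :=
  ⟨!![p, q; r, s], by rw [Matrix.det_fin_two_of]; linarith⟩

lemma slact_comp {γ δ : SL2'} {Q Q' Q'' : ℤ × ℤ × ℤ}
    (h1 : SLAct γ Q Q') (h2 : SLAct δ Q' Q'') : SLAct (γ * δ) Q Q'' := by
  intro X Y
  have h := h1 ((δ : Matrix (Fin 2) (Fin 2) ℤ) 0 0 * X + (δ : Matrix (Fin 2) (Fin 2) ℤ) 0 1 * Y)
    ((δ : Matrix (Fin 2) (Fin 2) ℤ) 1 0 * X + (δ : Matrix (Fin 2) (Fin 2) ℤ) 1 1 * Y)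
  rw [← h2 X Y, ← h]
  congr 1 <;>
    simp [Matrix.SpecialLinearGroup.coe_mul, Matrix.mul_apply, Fin.sum_univ_two] <;> ring

lemma slact_mkSL {p q r s : ℤ} (h : p * s - q * r = 1) {Q Q' : ℤ × ℤ × ℤ}
    (hQ : ∀ X Y : ℤ, evalQF Q (p * X + q * Y) (r * X + s * Y) = evalQF Q' X Y) :
    SLAct (mkSL p q r s h) Q Q' := hQ

lemma mul_entry10 (γ δ : SL2') :
    ((γ * δ : SL2') : Matrix (Fin 2) (Fin 2) ℤ) 1 0
      = (γ : Matrix (Fin 2) (Fin 2) ℤ) 1 0 * (δ : Matrix (Fin 2) (Fin 2) ℤ) 0 0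
      + (γ : Matrix (Fin 2) (Fin 2) ℤ) 1 1 * (δ : Matrix (Fin 2) (Fin 2) ℤ) 1 0 := by
  simp [Matrix.SpecialLinearGroup.coe_mul, Matrix.mul_apply, Fin.sum_univ_two]

lemma reduce : ∀ n : ℕ, ∀ a b c : ℤ, 0 < a → a.toNat ≤ n → b ^ 2 - 4 * a * c = -4 →
    SLEquiv (a, b, c) (1, 0, 1) := by
  intro n
  induction n with
  | zero => intro a b c ha han _; omega
  | succ n ih =>
    intro a b c ha han hdisc
    set m : ℤ := -((b + a) / (2 * a)) with hm
    set b' : ℤ := b + 2 * a * m with hb'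
    set c' : ℤ := a * m ^ 2 + b * m + c with hc'
    have h2a : (0:ℤ) < 2 * a := by linarith
    have hde : b + a = 2 * a * ((b + a) / (2 * a)) + (b + a) % (2 * a) :=
      (Int.mul_ediv_add_emod _ _).symm
    have hmn : 0 ≤ (b + a) % (2 * a) := Int.emod_nonneg _ (by omega)
    have hml : (b + a) % (2 * a) < 2 * a := Int.emod_lt_of_pos _ h2a
    have hbl : -a ≤ b' := by
      have : b' = (b + a) % (2 * a) - a := by rw [hb', hm]; linarith [hde]
      omega
    have hbu : b' < a := by
      have : b' = (b + a) % (2 * a) - a := by rw [hb', hm]; linarith [hde]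
      omega
    have hdisc' : b' ^ 2 - 4 * a * c' = -4 := by rw [hb', hc']; ring_nf; linarith [hdisc]
    have hT : SLAct (mkSL 1 m 0 1 (by ring)) (a, b, c) (a, b', c') := by
      apply slact_mkSL
      intro X Y
      simp only [evalQF, hb', hc']
      ring
    by_cases h1 : a = 1
    · subst h1
      have hb0 : b' = 0 := by
        rcases (by omega : b' = -1 ∨ b' = 0) with h | h
        · rw [h] at hdisc'; omega
        · exact h
      have hc1 : c' = 1 := by rw [hb0] at hdisc'; linarith
      exact ⟨_, by rw [hb0, hc1] at hT; exact hT⟩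
    · have ha2 : 2 ≤ a := by omega
      have hb2 : b' ^ 2 ≤ a ^ 2 := by nlinarith
      have hcpos : 0 < c' := by nlinarith
      have hclt : c' < a := by nlinarith
      have hS : SLAct (mkSL 0 (-1) 1 0 (by ring)) (a, b', c') (c', -b', a) := by
        apply slact_mkSL
        intro X Y
        simp only [evalQF]
        ring
      obtain ⟨γ, hγ⟩ := ih c' (-b') a hcpos (by omega) (by linarith [hdisc'])
      exact ⟨_, slact_comp hT (slact_comp hS hγ)⟩

lemma mod3_of_equiv {a b c A B C : ℤ} (h : Gamma0Equiv 3 (a, b, c) (A, B, C)) :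
    (a : ZMod 3) = (A : ZMod 3) := by
  obtain ⟨γ, h3, hγ⟩ := h
  set p := (γ : Matrix (Fin 2) (Fin 2) ℤ) 0 0 with hp
  set q := (γ : Matrix (Fin 2) (Fin 2) ℤ) 0 1 with hq
  set r := (γ : Matrix (Fin 2) (Fin 2) ℤ) 1 0 with hr
  set s := (γ : Matrix (Fin 2) (Fin 2) ℤ) 1 1 with hs
  have hv : a * p ^ 2 + b * p * r + c * r ^ 2 = A := by
    have := hγ 1 0
    simp only [evalQF] at this
    linear_combination this
  have hdet : p * s - q * r = 1 := by
    have := γ.2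
    rw [Matrix.det_fin_two] at this
    linear_combination this
  have hv3 : (a : ZMod 3) * (p : ZMod 3) ^ 2 + (b : ZMod 3) * p * r + (c : ZMod 3) * r ^ 2
      = (A : ZMod 3) := by exact_mod_cast congrArg (fun z : ℤ => (z : ZMod 3)) hv
  have hdet3 : (p : ZMod 3) * (s : ZMod 3) - (q : ZMod 3) * (r : ZMod 3) = 1 := by
    exact_mod_cast congrArg (fun z : ℤ => (z : ZMod 3)) hdet
  have hr3 : (r : ZMod 3) = 0 := (ZMod.intCast_zmod_eq_zero_iff_dvd r 3).mpr h3
  rw [hr3] at hv3 hdet3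
  have key : ∀ a p s A : ZMod 3, a * p ^ 2 + 0 = A → p * s - 0 = 1 → a = A := by decide
  have := key a p s A (by rw [← hv3]; ring) (by rw [← hdet3]; ring)
  exact this

/-- Every positive definite integral binary quadratic form of discriminant `-4` is
`Γ₀(3)`-equivalent to exactly one of `[1,0,1]` and `[2,-2,1]`; in particular these
two forms are inequivalent under `Γ₀(3)`. -/
theorem disc_neg4_level3_classes :
    (∀ a b c : ℤ, 0 < a → b ^ 2 - 4 * a * c = -4 →
      Xor' (Gamma0Equiv 3 (a, b, c) (1, 0, 1)) (Gamma0Equiv 3 (a, b, c) (2, -2, 1))) ∧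
    ¬ Gamma0Equiv 3 (1, 0, 1) (2, -2, 1) := by
  have not_both : ∀ a b c : ℤ, Gamma0Equiv 3 (a, b, c) (1, 0, 1) →
      Gamma0Equiv 3 (a, b, c) (2, -2, 1) → False := by
    intro a b c h1 h2
    have e1 := mod3_of_equiv h1
    have e2 := mod3_of_equiv h2
    rw [e1] at e2
    revert e2; decide
  constructor
  · intro a b c ha hdisc
    obtain ⟨γ, hγ⟩ := reduce a.toNat a b c ha le_rfl hdisc
    set r := (γ : Matrix (Fin 2) (Fin 2) ℤ) 1 0 with hr
    set s := (γ : Matrix (Fin 2) (Fin 2) ℤ) 1 1 with hs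
    have hdet : (γ : Matrix (Fin 2) (Fin 2) ℤ) 0 0 * s
        - (γ : Matrix (Fin 2) (Fin 2) ℤ) 0 1 * r = 1 := by
      have := γ.2
      rw [Matrix.det_fin_two] at this
      linear_combination this
    by_cases h3r : (3:ℤ) ∣ r
    · -- equivalent to (1,0,1)
      refine Or.inl ⟨⟨γ, h3r, hγ⟩, fun h2 => not_both a b c ⟨γ, h3r, hγ⟩ h2⟩
    · by_cases h3s : (3:ℤ) ∣ s
      · -- use S
        have hS : SLAct (mkSL 0 (-1) 1 0 (by ring)) (1, 0, 1) (1, 0, 1) := by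
          apply slact_mkSL; intro X Y; simp only [evalQF]; ring
        have hcomp := slact_comp hγ hS
        have hdiv : (3:ℤ) ∣ ((γ * mkSL 0 (-1) 1 0 (by ring) : SL2')
            : Matrix (Fin 2) (Fin 2) ℤ) 1 0 := by
          rw [mul_entry10]
          show (3:ℤ) ∣ r * (0:ℤ) + s * (1:ℤ)
          simpa using h3s
        refine Or.inl ⟨⟨_, hdiv, hcomp⟩, fun h2 => not_both a b c ⟨_, hdiv, hcomp⟩ h2⟩
      · have hcase : (3:ℤ) ∣ r + s ∨ (3:ℤ) ∣ r - s := by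
          have h1 : r % 3 = 1 ∨ r % 3 = 2 := by omega
          have h2 : s % 3 = 1 ∨ s % 3 = 2 := by omega
          rcases h1 with h1 | h1 <;> rcases h2 with h2 | h2
          · right; omega
          · left; omega
          · left; omega
          · right; omega
        have not1 : ∀ h2 : Gamma0Equiv 3 (a, b, c) (2, -2, 1),
            ¬ Gamma0Equiv 3 (a, b, c) (1, 0, 1) := fun h2 h1 => not_both a b c h1 h2
        rcases hcase with hd | hd
        · have hδ : SLAct (mkSL 1 (-1) 1 0 (by ring)) (1, 0, 1) (2, -2, 1) := by
            apply slact_mkSL; intro X Y; simp only [evalQF]; ring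
          have hcomp := slact_comp hγ hδ
          have hdiv : (3:ℤ) ∣ ((γ * mkSL 1 (-1) 1 0 (by ring) : SL2')
              : Matrix (Fin 2) (Fin 2) ℤ) 1 0 := by
            rw [mul_entry10]
            show (3:ℤ) ∣ r * (1:ℤ) + s * (1:ℤ)
            simpa using hd
          exact Or.inr ⟨⟨_, hdiv, hcomp⟩, not1 ⟨_, hdiv, hcomp⟩⟩
        · have hδ : SLAct (mkSL 1 0 (-1) 1 (by ring)) (1, 0, 1) (2, -2, 1) := by
            apply slact_mkSL; intro X Y; simp only [evalQF]; ring
          have hcomp := slact_comp hγ hδ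
          have hdiv : (3:ℤ) ∣ ((γ * mkSL 1 0 (-1) 1 (by ring) : SL2')
              : Matrix (Fin 2) (Fin 2) ℤ) 1 0 := by
            rw [mul_entry10]
            show (3:ℤ) ∣ r * (1:ℤ) + s * (-1:ℤ)
            have : r * (1:ℤ) + s * (-1:ℤ) = r - s := by ring
            rw [this]; exact hd
          exact Or.inr ⟨⟨_, hdiv, hcomp⟩, not1 ⟨_, hdiv, hcomp⟩⟩
  · intro h
    have := mod3_of_equiv h
    revert this; decide
end

section
/- Let p be an odd prime not dividing 15. If there exist integers x, y with p = x² + xy + 4y², then the Legendre symbol (5/p) equals 1. If there exist integers x, y with p = 2x² + xy + 2y², then the Legendre symbol (5/p) equals −1. -/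
lemma zmod5_sq (a : ZMod 5) (ha : a ≠ 0) (h : ∃ s : ZMod 5, 4 * a = s ^ 2) :
    IsSquare a := by revert h ha; revert a; decide

lemma zmod5_nsq (a : ZMod 5) (ha : a ≠ 0) (h : ∃ s : ZMod 5, 3 * a = s ^ 2) :
    ¬ IsSquare a := by revert h ha; revert a; decide

/-- Evaluation of the genus character `χ_{5,-3}` on the two classes of forms of
discriminant `-15`: an odd prime `p ∤ 15` represented by `x² + xy + 4y²` has
Legendre symbol `(5/p) = 1`, while one represented by `2x² + xy + 2y²` has
`(5/p) = -1`. -/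
theorem genus_character_disc_neg15 (p : ℕ) (hp : p.Prime) (hodd : Odd p)
    (h15 : ¬ p ∣ 15) :
    ((∃ x y : ℤ, (p : ℤ) = x ^ 2 + x * y + 4 * y ^ 2) → @legendreSym p ⟨hp⟩ 5 = 1) ∧
    ((∃ x y : ℤ, (p : ℤ) = 2 * x ^ 2 + x * y + 2 * y ^ 2) → @legendreSym p ⟨hp⟩ 5 = -1) := by
  haveI : Fact p.Prime := ⟨hp⟩
  haveI : Fact (Nat.Prime 5) := ⟨by norm_num⟩
  have hp2 : p ≠ 2 := by rintro rfl; exact (by norm_num : ¬ Odd 2) hodd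
  have hp5 : ¬ (5 : ℕ) ∣ p := by
    intro h
    have := (Nat.prime_dvd_prime_iff_eq (by norm_num) hp).mp h
    exact h15 (this ▸ (by norm_num : (5:ℕ) ∣ 15))
  have hpz : ((p : ℤ) : ZMod 5) ≠ 0 := by
    rw [Int.cast_natCast, Ne, ZMod.natCast_eq_zero_iff]
    exact hp5
  have hrec : legendreSym p 5 = legendreSym 5 p :=
    legendreSym.quadratic_reciprocity_one_mod_four (by norm_num) hp2
  constructor
  · rintro ⟨x, y, hxy⟩
    rw [hrec, legendreSym.eq_one_iff 5 hpz]
    apply zmod5_sq _ (by exact_mod_cast hpz)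
    refine ⟨(2 * (x : ZMod 5) + y), ?_⟩
    have : ((p : ℤ) : ZMod 5) = ((x ^ 2 + x * y + 4 * y ^ 2 : ℤ) : ZMod 5) := by
      exact_mod_cast congrArg (fun z : ℤ => (z : ZMod 5)) hxy
    push_cast at this ⊢
    rw [this]
    have h5 : (5 : ZMod 5) = 0 := by rfl
    linear_combination 3 * (y : ZMod 5) ^ 2 * h5
  · rintro ⟨x, y, hxy⟩
    rw [hrec, legendreSym.eq_neg_one_iff 5]
    apply zmod5_nsq _ (by exact_mod_cast hpz)
    refine ⟨(4 * (x : ZMod 5) + y), ?_⟩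
    have : ((p : ℤ) : ZMod 5) = ((2 * x ^ 2 + x * y + 2 * y ^ 2 : ℤ) : ZMod 5) := by
      exact_mod_cast congrArg (fun z : ℤ => (z : ZMod 5)) hxy
    push_cast at this ⊢
    rw [this]
    have h5 : (5 : ZMod 5) = 0 := by rfl
    linear_combination (-2 * (x : ZMod 5) ^ 2 - x * y + y ^ 2) * h5
end

section
/- Let p be an odd prime not dividing 15. If there exist integers x, y with p = 3x² − 3xy + 2y², then the Legendre symbol (−3/p) equals −1. If there exist integers x, y with p = 6x² + 3xy + y², then the Legendre symbol (−3/p) equals 1. -/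
/-! Quadratic reciprocity turns `(-3/p)` into `(p/3)`, which only depends on `p mod 3`.
Reducing the two forms mod 3 gives `p ≡ 2y²` and `p ≡ y²` respectively, with `3 ∤ y` since
`3 ∤ p`; as `2` is a non-residue and `1` a residue mod 3, the two values follow. -/

theorem legendreSym_neg_three {p : ℕ} [Fact p.Prime] (hp : p ≠ 2) :
    legendreSym p (-3) = legendreSym 3 p := by
  have hp_odd : p % 2 = 1 := Nat.odd_iff.mp ((Fact.out : p.Prime).odd_of_ne_two hp)
  have hneg_one : legendreSym p (-1) = (-1) ^ (p / 2) := by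
    rw [legendreSym.at_neg_one hp, ZMod.χ₄_eq_neg_one_pow hp_odd]
  have hthree : legendreSym p 3 = (-1) ^ (p / 2) * legendreSym 3 p := by
    simpa using legendreSym.quadratic_reciprocity' (p := 3) (q := p) (by norm_num) hp
  calc legendreSym p (-3) = legendreSym p (-1) * legendreSym p 3 := by
        rw [← legendreSym.mul]; norm_num
    _ = ((-1) ^ (p / 2)) ^ 2 * legendreSym 3 p := by rw [hneg_one, hthree]; ring
    _ = legendreSym 3 p := by rw [← pow_mul, pow_mul', neg_one_sq, one_pow, one_mul]

theorem legendreSym_mul_sq_add_mul (p : ℕ) [Fact p.Prime] {a b c : ℤ}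
    (h : ((c * b ^ 2 + p * a : ℤ) : ZMod p) ≠ 0) :
    legendreSym p (c * b ^ 2 + p * a) = legendreSym p c := by
  have hb : (b : ZMod p) ≠ 0 := by
    intro hb
    apply h
    simp [hb]
  rw [legendreSym.mod, Int.add_mul_emod_self_left, ← legendreSym.mod, legendreSym.mul,
    legendreSym.sq_one' p hb, mul_one]

/-- Evaluation of the genus character `χ_{-3}` on the level 3 representatives of
discriminant `-15`: an odd prime `p ∤ 15` represented by `3x² - 3xy + 2y²` has
Legendre symbol `(-3/p) = -1`, while one represented by `6x² + 3xy + y²` has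
`(-3/p) = 1`. -/
theorem genus_character_level3_disc_neg15 (p : ℕ) (hp : p.Prime) (hodd : Odd p)
    (h15 : ¬ p ∣ 15) :
    ((∃ x y : ℤ, (p : ℤ) = 3 * x ^ 2 - 3 * x * y + 2 * y ^ 2) →
      @legendreSym p ⟨hp⟩ (-3) = -1) ∧
    ((∃ x y : ℤ, (p : ℤ) = 6 * x ^ 2 + 3 * x * y + y ^ 2) →
      @legendreSym p ⟨hp⟩ (-3) = 1) := by
  have : Fact p.Prime := ⟨hp⟩
  have hp3 : ((p : ℤ) : ZMod 3) ≠ 0 := by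
    rw [Ne, ZMod.intCast_zmod_eq_zero_iff_dvd]
    norm_cast
    intro h3
    exact h15 ((Nat.prime_dvd_prime_iff_eq Nat.prime_three hp).mp h3 ▸ by norm_num)
  rw [legendreSym_neg_three (hodd.ne_two_of_dvd_nat dvd_rfl)]
  constructor
  · rintro ⟨x, y, hxy⟩
    have hform : (p : ℤ) = 2 * y ^ 2 + (3 : ℕ) * (x ^ 2 - x * y) := by rw [hxy]; push_cast; ring
    rw [hform] at hp3 ⊢
    rw [legendreSym_mul_sq_add_mul 3 hp3]
    decide
  · rintro ⟨x, y, hxy⟩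
    have hform : (p : ℤ) = 1 * y ^ 2 + (3 : ℕ) * (2 * x ^ 2 + x * y) := by rw [hxy]; push_cast; ring
    rw [hform] at hp3 ⊢
    rw [legendreSym_mul_sq_add_mul 3 hp3, legendreSym.at_one]
end

section
/- In the field of formal Laurent series over ℚ in the variable X, define: Θ = ∑_{n∈ℤ} X^{n²}; E = 1 − 264·∑_{n≥1} σ₉(n) X^{4n}, where σ₉(n) is the sum of the 9th powers of the positive divisors of n; P = X⁴ · ∏_{n≥1} (1 − X^{4n})²⁴, the infinite product taken in the X-adic topology on ℚ[[X]]; and let D be the derivation sending ∑ aₙXⁿ to ∑ n·aₙXⁿ. Then P is invertible, and the Laurent series f = −(1/20)·( ( (1/2)·Θ·(D E) − 10·E·(D Θ) )·P⁻¹ + 608·Θ ) satisfies: its coefficient of Xⁿ vanishes for all n < −3 and for all n with −3 ≤ n ≤ 16 and n ≡ 2 or 3 (mod 4), and its coefficients of X⁻³, X⁰, X¹, X⁴, X⁵, X⁸, X⁹, X¹², X¹³, X¹⁶ are respectively 1, 0, −248, 26752, −85995, 1707264, −4096248, 44330496, −91951146, 708938752. -/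
/-!
Write `P = X⁴ Q` with `Q = ∏ (1 - X^{4n})²⁴`. Then `X⁴ f₃` is the power series
`-(1/40) ((Θ·DE - 20 E·DΘ) Q⁻¹ + 1216 X⁴ Θ)`, so the claimed coefficients of `f₃` (up to `X¹⁶`)
are those of this series modulo `X²¹`. Modulo `X²¹` only finitely many terms of the sums `Θ`, `E`
and of the product `Q` survive, and `D` respects congruences, so `Θ, DΘ, E, DE, Q` are congruent
to explicit polynomials. After multiplying by the unit `-40 Q`, the claim becomes a polynomial
identity in `ℚ[[X]] / (X²¹)`.
-/

noncomputable section

/-- The product (coefficientwise) topology on `ℚ[[X]]`; since `ℚ` is discrete this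
coincides with the `X`-adic topology. -/
instance : TopologicalSpace (PowerSeries ℚ) :=
  @Pi.topologicalSpace (Unit →₀ ℕ) (fun _ => ℚ) (fun _ => ⊥)

open PowerSeries

/-- `Θ = ∑_{n ∈ ℤ} X^{n²}`. -/
def Theta : PowerSeries ℚ := ∑' n : ℤ, (X : PowerSeries ℚ) ^ (n.natAbs ^ 2)

/-- `E = 1 - 264 ∑_{n ≥ 1} σ₉(n) X^{4n}`, where `σ₉(n)` is the sum of the 9th powers
of the positive divisors of `n`. -/
def Eseries : PowerSeries ℚ :=
  1 - 264 * ∑' n : ℕ, ((∑ d ∈ (n + 1).divisors, d ^ 9 : ℕ) : ℚ) •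
      (X : PowerSeries ℚ) ^ (4 * (n + 1))

/-- `P = X⁴ ∏_{n ≥ 1} (1 - X^{4n})²⁴`, the infinite product taken in the topology
above. -/
def Pseries : PowerSeries ℚ :=
  X ^ 4 * ∏' n : ℕ, (1 - (X : PowerSeries ℚ) ^ (4 * (n + 1))) ^ 24

/-- The ring embedding of `ℚ[[X]]` into the field of formal Laurent series `ℚ((X))`. -/
def toLaurent : PowerSeries ℚ →+* LaurentSeries ℚ := HahnSeries.ofPowerSeries ℤ ℚ

/-- The derivation `D(∑ aₙ Xⁿ) = ∑ n aₙ Xⁿ` on Laurent series. -/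
def Dop (f : LaurentSeries ℚ) : LaurentSeries ℚ :=
  ⟨fun n => (n : ℚ) * f.coeff n,
    f.isPWO_support.mono (by
      intro n hn
      simp only [Function.mem_support, ne_eq] at hn ⊢
      exact fun h => hn (by rw [h, mul_zero]))⟩

/-- The Laurent series
`f = -(1/20) (((1/2) Θ (DE) - 10 E (DΘ)) P⁻¹ + 608 Θ)`,
i.e. Zagier's weight one-half form `f₃`, as a formal Laurent series. -/
def fThree : LaurentSeries ℚ :=
  -(1 / 20 : LaurentSeries ℚ) *
    (((1 / 2 : LaurentSeries ℚ) * toLaurent Theta * Dop (toLaurent Eseries) -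
        10 * toLaurent Eseries * Dop (toLaurent Theta)) * (toLaurent Pseries)⁻¹ +
      608 * toLaurent Theta)

open Filter Topology

section Truncation

variable {R : Type*}

lemma X_pow_dvd_sub_iff_mk_eq [CommRing R] {N : ℕ} {f g : R⟦X⟧} :
    X ^ N ∣ f - g ↔
      Ideal.Quotient.mk (Ideal.span {X ^ N}) f = Ideal.Quotient.mk (Ideal.span {X ^ N}) g := by
  rw [Ideal.Quotient.eq, Ideal.mem_span_singleton]

lemma mk_X_pow_eq_zero [CommRing R] {N n : ℕ} (h : N ≤ n) :
    Ideal.Quotient.mk (Ideal.span {(X : R⟦X⟧) ^ N}) X ^ n = 0 := by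
  rw [← map_pow, Ideal.Quotient.eq_zero_iff_mem, Ideal.mem_span_singleton]
  exact pow_dvd_pow X h

lemma X_pow_dvd_prod_sub_one [CommRing R] {ι : Type*} {f : ι → R⟦X⟧} {N : ℕ} (s : Finset ι)
    (hs : ∀ i ∈ s, X ^ N ∣ f i - 1) : X ^ N ∣ ∏ i ∈ s, f i - 1 := by
  rw [X_pow_dvd_sub_iff_mk_eq, map_prod, map_one]
  exact Finset.prod_eq_one fun i hi => (X_pow_dvd_sub_iff_mk_eq.1 (hs i hi)).trans (map_one _)

lemma X_pow_dvd_one_sub_X_pow_pow_sub_one [CommRing R] {N k : ℕ} (h : N ≤ k) (m : ℕ) :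
    (X : R⟦X⟧) ^ N ∣ (1 - X ^ k) ^ m - 1 := by
  have := sub_dvd_pow_sub_pow (1 - (X : R⟦X⟧) ^ k) 1 m
  rw [one_pow, sub_sub_cancel_left, neg_dvd] at this
  exact (pow_dvd_pow X h).trans this

lemma coeff_ofNat_mul [Semiring R] (c n : ℕ) [c.AtLeastTwo] (f : R⟦X⟧) :
    coeff n ((no_index (OfNat.ofNat c : R⟦X⟧)) * f) = OfNat.ofNat c * coeff n f := by
  rw [← map_ofNat C c, coeff_C_mul]

@[simp]
lemma derivative_ofNat [CommSemiring R] (c : ℕ) [c.AtLeastTwo] :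
    d⁄dX R (no_index (OfNat.ofNat c : R⟦X⟧)) = 0 := by
  rw [← map_ofNat C c, derivative_C]

lemma coeff_X_mul_derivative [CommSemiring R] (f : R⟦X⟧) (n : ℕ) :
    coeff n (X * d⁄dX R f) = n * coeff n f := by
  cases n with
  | zero => simp
  | succ n => rw [coeff_succ_X_mul, coeff_derivative, mul_comm, Nat.cast_succ]

lemma X_pow_dvd_X_mul_derivative_sub [CommRing R] {N : ℕ} {f g : R⟦X⟧} (h : X ^ N ∣ f - g) :
    X ^ N ∣ X * d⁄dX R f - X * d⁄dX R g := by
  refine X_pow_dvd_iff.2 fun k hk => ?_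
  rw [← mul_sub, ← map_sub, coeff_X_mul_derivative, X_pow_dvd_iff.1 h k hk, mul_zero]

end Truncation

section XAdic

variable {ι : Type*}

/- The topology fixed on `ℚ⟦X⟧` above is `PowerSeries.WithPiTopology` for the discrete
topology `⊥` on `ℚ`, which is how Mathlib's lemmas are brought to bear on it. -/
lemma eventually_coeff_eq_of_tendsto {l : Filter ι} {F : ι → ℚ⟦X⟧} {g : ℚ⟦X⟧}
    (h : Tendsto F l (𝓝 g)) (k : ℕ) : ∀ᶠ i in l, coeff k (F i) = coeff k g := by
  let _ : TopologicalSpace ℚ := ⊥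
  have _ : DiscreteTopology ℚ := ⟨rfl⟩
  have := (WithPiTopology.tendsto_iff_coeff_tendsto ℚ F l g).1 h k
  rwa [nhds_discrete, tendsto_pure] at this

lemma summable_of_X_pow_dvd {f : ι → ℚ⟦X⟧} (h : ∀ N, ∀ᶠ i in cofinite, X ^ N ∣ f i) :
    Summable f := by
  let _ : TopologicalSpace ℚ := ⊥
  refine (WithPiTopology.summable_iff_summable_coeff ℚ).2 fun d => summable_of_hasFiniteSupport ?_
  refine (h (d + 1)).subset fun i hi hdvd => hi ?_
  exact X_pow_dvd_iff.1 hdvd d d.lt_succ_self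

lemma multipliable_of_X_pow_dvd_sub_one [LinearOrder ι] [LocallyFiniteOrderBot ι]
    {f : ι → ℚ⟦X⟧} (h : ∀ N, ∀ᶠ i in atTop, X ^ N ∣ f i - 1) : Multipliable f := by
  let _ : TopologicalSpace ℚ := ⊥
  have := WithPiTopology.multipliable_one_add_of_tendsto_order_atTop_nhds_top ℚ
    (f := fun i => f i - 1) ?_
  · simp only [add_sub_cancel] at this
    exact this
  refine ENat.tendsto_nhds_top_iff_natCast_lt.2 fun N => (h (N + 1)).mono fun i hi => ?_
  exact Nat.cast_lt.2 N.lt_succ_self |>.trans_le (nat_le_order _ _ (X_pow_dvd_iff.1 hi))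

lemma X_pow_dvd_tsum_sub_sum {f : ι → ℚ⟦X⟧} (hf : Summable f) {N : ℕ} (s : Finset ι)
    (hs : ∀ i ∉ s, X ^ N ∣ f i) : X ^ N ∣ ∑' i, f i - ∑ i ∈ s, f i := by
  classical
  refine X_pow_dvd_iff.2 fun k hk => ?_
  obtain ⟨t, ht⟩ := eventually_atTop.1 (eventually_coeff_eq_of_tendsto hf.hasSum k)
  have htail : X ^ N ∣ ∑ i ∈ (t ∪ s) \ s, f i :=
    Finset.dvd_sum fun i hi => hs i (Finset.mem_sdiff.1 hi).2
  rw [map_sub, ← ht (t ∪ s) Finset.subset_union_left, ← Finset.sum_sdiff Finset.subset_union_right,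
    map_add, X_pow_dvd_iff.1 htail k hk, zero_add, sub_self]

lemma X_pow_dvd_tprod_sub_prod {f : ℕ → ℚ⟦X⟧} (hf : Multipliable f) {N : ℕ} (m : ℕ)
    (hm : ∀ i, m ≤ i → X ^ N ∣ f i - 1) : X ^ N ∣ ∏' i, f i - ∏ i ∈ Finset.range m, f i := by
  refine X_pow_dvd_iff.2 fun k hk => ?_
  obtain ⟨n, hn⟩ := eventually_atTop.1 (eventually_coeff_eq_of_tendsto hf.tendsto_prod_tprod_nat k)
  have hsplit : X ^ N ∣ ∏ i ∈ Finset.range (max n m), f i - ∏ i ∈ Finset.range m, f i := by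
    rw [← Finset.prod_range_mul_prod_Ico f (le_max_right n m), ← mul_sub_one]
    exact (X_pow_dvd_prod_sub_one _ fun i hi => hm i (Finset.mem_Ico.1 hi).1).mul_left _
  rw [map_sub, ← hn _ (le_max_left n m), ← map_sub, X_pow_dvd_iff.1 hsplit k hk]

end XAdic

lemma X_pow_dvd_Theta_sub :
    (X : ℚ⟦X⟧) ^ 21 ∣ Theta - (1 + 2 * X + 2 * X ^ 4 + 2 * X ^ 9 + 2 * X ^ 16) := by
  have hsumm : Summable fun n : ℤ => (X : ℚ⟦X⟧) ^ (n.natAbs ^ 2) :=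
    summable_of_X_pow_dvd fun N => (Set.finite_Ioo (-(N : ℤ)) N).subset fun n hn => by
      by_contra hn'
      have hN : N ≤ n.natAbs := by simp only [Set.mem_Ioo] at hn'; omega
      exact hn (pow_dvd_pow X (hN.trans (Nat.le_self_pow two_ne_zero _)))
  have hhead : ∑ n ∈ Finset.Ioo (-5 : ℤ) 5, (X : ℚ⟦X⟧) ^ (n.natAbs ^ 2) =
      1 + 2 * X + 2 * X ^ 4 + 2 * X ^ 9 + 2 * X ^ 16 := by
    rw [show Finset.Ioo (-5 : ℤ) 5 = {-4, -3, -2, -1, 0, 1, 2, 3, 4} by decide]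
    simp
    ring
  rw [← hhead]
  refine X_pow_dvd_tsum_sub_sum hsumm _ fun n hn => pow_dvd_pow X ?_
  have : 5 ≤ n.natAbs := by simp only [Finset.mem_Ioo] at hn; omega
  nlinarith

lemma X_pow_dvd_X_mul_derivative_Theta_sub :
    (X : ℚ⟦X⟧) ^ 21 ∣ X * d⁄dX ℚ Theta - (2 * X + 8 * X ^ 4 + 18 * X ^ 9 + 32 * X ^ 16) := by
  convert X_pow_dvd_X_mul_derivative_sub X_pow_dvd_Theta_sub using 2
  simp
  ring

lemma X_pow_dvd_Eseries_sub : (X : ℚ⟦X⟧) ^ 21 ∣ Eseries -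
    (1 - 264 * X ^ 4 - 135432 * X ^ 8 - 5196576 * X ^ 12 - 69341448 * X ^ 16 -
      515625264 * X ^ 20) := by
  set f : ℕ → ℚ⟦X⟧ := fun n => ((∑ d ∈ (n + 1).divisors, d ^ 9 : ℕ) : ℚ) • X ^ (4 * (n + 1))
  have hdvd : ∀ N n, N ≤ 4 * (n + 1) → X ^ N ∣ f n := fun N n h => by
    simp only [f, smul_eq_C_mul]
    exact (pow_dvd_pow X h).mul_left _
  have hsumm : Summable f := summable_of_X_pow_dvd fun N =>
    (Set.finite_Iio N).subset fun n hn => by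
      by_contra hn'
      exact hn (hdvd N n (by simp only [Set.mem_Iio] at hn'; omega))
  have hhead : ∑ n ∈ Finset.range 5, f n =
      X ^ 4 + 513 * X ^ 8 + 19684 * X ^ 12 + 262657 * X ^ 16 + 1953126 * X ^ 20 := by
    simp only [f, Nat.cast_smul_eq_nsmul, nsmul_eq_mul]
    simp [Finset.sum_range_succ, Nat.divisors, Finset.sum_filter, Finset.sum_Ico_succ_top]
    ring
  have htail := X_pow_dvd_tsum_sub_sum hsumm (Finset.range 5) fun n hn =>
    hdvd 21 n (by simp only [Finset.mem_range] at hn; omega)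
  rw [hhead] at htail
  convert htail.mul_left (-264) using 1
  rw [Eseries]
  ring

lemma X_pow_dvd_X_mul_derivative_Eseries_sub : (X : ℚ⟦X⟧) ^ 21 ∣ X * d⁄dX ℚ Eseries -
    (-1056 * X ^ 4 - 1083456 * X ^ 8 - 62358912 * X ^ 12 - 1109463168 * X ^ 16 -
      10312505280 * X ^ 20) := by
  convert X_pow_dvd_X_mul_derivative_sub X_pow_dvd_Eseries_sub using 2
  simp
  ring

def Qseries : ℚ⟦X⟧ := ∏' n : ℕ, (1 - (X : ℚ⟦X⟧) ^ (4 * (n + 1))) ^ 24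

/- The coefficients are Ramanujan's `τ(1), …, τ(6)`, as `X⁴ Q = Δ(4τ)`. The `ring_nf` / `simp`
pair normalises and then discards the monomials of degree `≥ 21`. -/
set_option maxRecDepth 4000 in
lemma X_pow_dvd_Qseries_sub : (X : ℚ⟦X⟧) ^ 21 ∣ Qseries -
    (1 - 24 * X ^ 4 + 252 * X ^ 8 - 1472 * X ^ 12 + 4830 * X ^ 16 - 6048 * X ^ 20) := by
  have hmult : Multipliable fun n : ℕ => (1 - (X : ℚ⟦X⟧) ^ (4 * (n + 1))) ^ 24 :=
    multipliable_of_X_pow_dvd_sub_one fun N => eventually_atTop.2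
      ⟨N, fun n hn => X_pow_dvd_one_sub_X_pow_pow_sub_one (by omega) 24⟩
  have htail := X_pow_dvd_tprod_sub_prod hmult 5 fun n hn =>
    X_pow_dvd_one_sub_X_pow_pow_sub_one (N := 21) (by omega) 24
  have hhead : (X : ℚ⟦X⟧) ^ 21 ∣ ∏ n ∈ Finset.range 5, (1 - (X : ℚ⟦X⟧) ^ (4 * (n + 1))) ^ 24 -
      (1 - 24 * X ^ 4 + 252 * X ^ 8 - 1472 * X ^ 12 + 4830 * X ^ 16 - 6048 * X ^ 20) := by
    rw [X_pow_dvd_sub_iff_mk_eq]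
    simp only [Finset.prod_range_succ, Finset.prod_range_zero, map_mul, map_pow, map_sub,
      map_add, map_one, map_ofNat]
    ring_nf
    simp (disch := norm_num) only [mk_X_pow_eq_zero, zero_mul, add_zero, sub_zero]
  rw [Qseries, ← sub_add_sub_cancel _ (∏ n ∈ Finset.range 5, _)]
  exact htail.add hhead

lemma constantCoeff_Qseries : constantCoeff Qseries = 1 := by
  have := X_pow_dvd_iff.1 X_pow_dvd_Qseries_sub 0 (by norm_num)
  rw [coeff_zero_eq_constantCoeff, map_sub, sub_eq_zero] at this
  simpa using this

lemma Qseries_mul_inv : Qseries * Qseries⁻¹ = 1 :=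
  PowerSeries.mul_inv_cancel _ (by simp [constantCoeff_Qseries])

lemma isUnit_toLaurent_Pseries : IsUnit (toLaurent Pseries) := by
  refine isUnit_iff_ne_zero.2 ((map_ne_zero_iff _ HahnSeries.ofPowerSeries_injective).2 ?_)
  refine mul_ne_zero (pow_ne_zero 4 X_ne_zero) fun h => ?_
  simpa [show Qseries = _ from h] using constantCoeff_Qseries

lemma Dop_toLaurent (f : ℚ⟦X⟧) : Dop (toLaurent f) = toLaurent (X * d⁄dX ℚ f) := by
  ext n
  change (n : ℚ) * (toLaurent f).coeff n = (toLaurent (X * d⁄dX ℚ f)).coeff n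
  simp only [toLaurent, PowerSeries.coeff_coe, coeff_X_mul_derivative]
  split_ifs with hn
  · rw [mul_zero]
  · lift n to ℕ using not_lt.1 hn
    simp

def fThreeShifted : ℚ⟦X⟧ :=
  C (-1 / 40) * ((Theta * (X * d⁄dX ℚ Eseries) - 20 * Eseries * (X * d⁄dX ℚ Theta)) *
    Qseries⁻¹ + 1216 * X ^ 4 * Theta)

lemma fThree_eq_toLaurent_mul_single :
    fThree = toLaurent fThreeShifted * HahnSeries.single (-4) 1 := by
  have hX : toLaurent (X ^ 4) * HahnSeries.single (-4) 1 = 1 := by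
    rw [toLaurent, HahnSeries.ofPowerSeries_X_pow, HahnSeries.single_mul_single]
    simp
  have hQ : toLaurent Qseries * toLaurent Qseries⁻¹ = 1 := by
    rw [← map_mul, Qseries_mul_inv, map_one]
  have hc : toLaurent (C (-1 / 40)) = -1 / 40 := by
    rw [toLaurent, HahnSeries.ofPowerSeries_C, map_div₀, map_neg, map_one, map_ofNat]
  rw [fThree, show Pseries = X ^ 4 * Qseries from rfl, Dop_toLaurent, Dop_toLaurent,
    fThreeShifted]
  simp only [map_mul, map_add, map_sub, map_ofNat, hc, mul_inv, inv_eq_of_mul_eq_one_right hX,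
    inv_eq_of_mul_eq_one_right hQ]
  have : CharZero (LaurentSeries ℚ) :=
    charZero_of_injective_algebraMap (algebraMap ℚ _).injective
  linear_combination (1216 / 40 * toLaurent Theta) * hX

lemma neg_forty_mul_fThreeShifted_mul_Qseries : -40 * fThreeShifted * Qseries =
    Theta * (X * d⁄dX ℚ Eseries) - 20 * Eseries * (X * d⁄dX ℚ Theta) +
      1216 * X ^ 4 * Theta * Qseries := by
  have hc : (-40 : ℚ⟦X⟧) * C (-1 / 40) = 1 := by
    rw [← map_ofNat C 40, ← map_neg, ← map_mul]
    norm_num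
  rw [fThreeShifted]
  linear_combination (((Theta * (X * d⁄dX ℚ Eseries) - 20 * Eseries * (X * d⁄dX ℚ Theta)) *
    Qseries⁻¹ + 1216 * X ^ 4 * Theta) * Qseries) * hc +
    (Theta * (X * d⁄dX ℚ Eseries) - 20 * Eseries * (X * d⁄dX ℚ Theta)) * Qseries_mul_inv

set_option maxRecDepth 4000 in
lemma X_pow_dvd_fThreeShifted_sub : (X : ℚ⟦X⟧) ^ 21 ∣ fThreeShifted -
    (X - 248 * X ^ 5 + 26752 * X ^ 8 - 85995 * X ^ 9 + 1707264 * X ^ 12 - 4096248 * X ^ 13 +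
      44330496 * X ^ 16 - 91951146 * X ^ 17 + 708938752 * X ^ 20) := by
  have hu : IsUnit (-40 * Qseries) := by
    rw [isUnit_iff_constantCoeff, map_mul, map_neg, map_ofNat, constantCoeff_Qseries]
    norm_num
  refine hu.dvd_mul_left.1 ?_
  rw [mul_sub, ← mul_right_comm, neg_forty_mul_fThreeShifted_mul_Qseries, X_pow_dvd_sub_iff_mk_eq]
  simp only [map_sub, map_add, map_mul, map_pow, X_pow_dvd_sub_iff_mk_eq.1 X_pow_dvd_Theta_sub,
    X_pow_dvd_sub_iff_mk_eq.1 X_pow_dvd_Eseries_sub, X_pow_dvd_sub_iff_mk_eq.1 X_pow_dvd_Qseries_sub,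
    X_pow_dvd_sub_iff_mk_eq.1 X_pow_dvd_X_mul_derivative_Theta_sub,
    X_pow_dvd_sub_iff_mk_eq.1 X_pow_dvd_X_mul_derivative_Eseries_sub, map_neg, map_one, map_ofNat]
  ring_nf
  simp (disch := norm_num) only [mk_X_pow_eq_zero, zero_mul, add_zero, sub_zero]

lemma coeff_fThree {n : ℤ} (hn : n ≤ 16) : fThree.coeff n = if n + 4 < 0 then 0 else
    coeff (n + 4).natAbs (X - 248 * X ^ 5 + 26752 * X ^ 8 - 85995 * X ^ 9 + 1707264 * X ^ 12 -
      4096248 * X ^ 13 + 44330496 * X ^ 16 - 91951146 * X ^ 17 + 708938752 * X ^ 20 : ℚ⟦X⟧) := by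
  have h := HahnSeries.coeff_mul_single_add (x := toLaurent fThreeShifted) (r := (1 : ℚ))
    (a := n + 4) (b := -4)
  rw [add_neg_cancel_right, mul_one] at h
  rw [fThree_eq_toLaurent_mul_single, h, toLaurent, PowerSeries.coeff_coe]
  split_ifs
  · rfl
  · rw [← sub_eq_zero, ← map_sub]
    exact X_pow_dvd_iff.1 X_pow_dvd_fThreeShifted_sub _ (by omega)

/-- `P` is invertible in the field of formal Laurent series, and the Laurent series
`f₃` has the stated Fourier coefficients: its coefficient of `Xⁿ` vanishes for
`n < -3` and for `-3 ≤ n ≤ 16` with `n ≡ 2, 3 (mod 4)`, while its coefficients of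
`X⁻³, X⁰, X¹, X⁴, X⁵, X⁸, X⁹, X¹², X¹³, X¹⁶` are
`1, 0, -248, 26752, -85995, 1707264, -4096248, 44330496, -91951146, 708938752`. -/
theorem fThree_coefficients :
    IsUnit (toLaurent Pseries) ∧
    (∀ n : ℤ, n < -3 → fThree.coeff n = 0) ∧
    (∀ n : ℤ, -3 ≤ n → n ≤ 16 → (n % 4 = 2 ∨ n % 4 = 3) → fThree.coeff n = 0) ∧
    fThree.coeff (-3) = 1 ∧
    fThree.coeff 0 = 0 ∧
    fThree.coeff 1 = -248 ∧
    fThree.coeff 4 = 26752 ∧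
    fThree.coeff 5 = -85995 ∧
    fThree.coeff 8 = 1707264 ∧
    fThree.coeff 9 = -4096248 ∧
    fThree.coeff 12 = 44330496 ∧
    fThree.coeff 13 = -91951146 ∧
    fThree.coeff 16 = 708938752 := by
  refine ⟨isUnit_toLaurent_Pseries, fun n hn => ?_, fun n h₁ h₂ h₃ => ?_, ?_, ?_, ?_, ?_, ?_, ?_,
    ?_, ?_, ?_, ?_⟩
  · rw [coeff_fThree (by omega)]
    split_ifs
    · rfl
    · obtain rfl : n = -4 := by omega
      simp
  · rw [coeff_fThree h₂]
    interval_cases n <;> simp_all [coeff_ofNat_mul, coeff_X_pow, coeff_X]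
  all_goals
    rw [coeff_fThree (by norm_num)]
    norm_num [coeff_ofNat_mul, coeff_X_pow, coeff_X]

end
end
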